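/- Let X_{ab}, Y_{ab} be symmetric real 3×3 matrices and Z_{ab} a trace-free real 3×3 matrix, and let W̄, 𝒫̄_a, t̄_{cd}, t*_{bd}, Q̄_{bcd} be the corresponding Bel superenergy quantities. Then: t̄_{ab} and t*_{ab} are symmetric; Q̄_{bcd} is symmetric in its last two indices (Q̄_{b(cd)} = Q̄_{bcd}); t̄^a{}_a = W̄; and Q̄_b{}^a{}_a = 𝒫̄_b. -/

import Mathlib

noncomputable section

/-- The Euclidean metric `δ_{ab}` on `ℝ³`. -/
def h3 : Fin 3 → Fin 3 → ℝ := fun a b => if a = b then 1 else 0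

/-- The 3-dimensional Levi-Civita symbol with `ε₁₂₃ = 1`. -/
def eps3 (a b c : Fin 3) : ℝ :=
  ((((b.val : ℤ) - a.val).sign * ((c.val : ℤ) - a.val).sign *
    ((c.val : ℤ) - b.val).sign : ℤ) : ℝ)

/-- A 3×3 array. -/
abbrev Mat3 := Fin 3 → Fin 3 → ℝ

/-- Bel superenergy density `W̄ = ½ (X_{ab} X^{ab} + Y_{ab} Y^{ab}) + Z_{ab} Z^{ab}`. -/
def Wb (X Y Z : Mat3) : ℝ :=
  (1/2) * (∑ a, ∑ b, (X a b * X a b + Y a b * Y a b)) + ∑ a, ∑ b, Z a b * Z a b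

/-- Bel super-Poynting vector `𝒫̄_a = ε_{abc} (Y_d{}^c Z^{bd} − X_d{}^c Z^{db})`. -/
def Pb (X Y Z : Mat3) (a : Fin 3) : ℝ :=
  ∑ b, ∑ c, ∑ d, eps3 a b c * (Y d c * Z b d - X d c * Z d b)

/-- `t̄_{cd} = h_{cd} W̄ − X_c{}^a X_{da} − Y_c{}^a Y_{da} − Z_{ac} Z^a{}_d − Z_c{}^a Z_{da}`. -/
def tb (X Y Z : Mat3) (c d : Fin 3) : ℝ :=
  h3 c d * Wb X Y Z
    - ∑ a, (X c a * X d a + Y c a * Y d a + Z a c * Z a d + Z c a * Z d a)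

/-- `t*_{bd} = 2 X_{(d}{}^a Y_{b)a} − X_{bd} Y^a{}_a − Y_{bd} X^a{}_a`
`+ h_{bd} (−X^{ac} Y_{ac} + Z^{ac} Z_{ac} + X^a{}_a Y^c{}_c) − Z^a{}_b Z_{ad} − Z_b{}^a Z_{da}`. -/
def tst (X Y Z : Mat3) (b d : Fin 3) : ℝ :=
  (∑ a, (X d a * Y b a + X b a * Y d a))
    - X b d * (∑ a, Y a a) - Y b d * (∑ a, X a a)
    + h3 b d * (-(∑ a, ∑ c, X a c * Y a c) + (∑ a, ∑ c, Z a c * Z a c)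
        + (∑ a, X a a) * (∑ c, Y c c))
    - (∑ a, Z a b * Z a d) - (∑ a, Z b a * Z d a)

/-- `Q̄_{bcd} = h_{cd} 𝒫̄_b + 2 Z^a{}_{(d} (−Y_{c)}{}^e ε_{bae} + ε_{c)ba} X^e{}_e + ε_{c)ae} X_b{}^e)`
`+ 2 Z^{ae} (h_{b(c} (ε_{d)ae} X^f{}_f − ε_{d)af} X_e{}^f) − X_{e(d} ε_{c)ba}`
`+ h_{cd} X_a{}^f ε_{bef} − X_{b(d} ε_{c)ae})`. -/
def Qb (X Y Z : Mat3) (b c d : Fin 3) : ℝ :=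
  h3 c d * Pb X Y Z b
  + (∑ a, Z a d * (-(∑ e, Y c e * eps3 b a e) + eps3 c b a * (∑ e, X e e)
      + ∑ e, eps3 c a e * X b e))
  + (∑ a, Z a c * (-(∑ e, Y d e * eps3 b a e) + eps3 d b a * (∑ e, X e e)
      + ∑ e, eps3 d a e * X b e))
  + ∑ a, ∑ e, Z a e *
      (h3 b c * (eps3 d a e * (∑ f, X f f) - ∑ f, eps3 d a f * X e f)
        + h3 b d * (eps3 c a e * (∑ f, X f f) - ∑ f, eps3 c a f * X e f)
        - (X e d * eps3 c b a + X e c * eps3 d b a)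
        + 2 * h3 c d * (∑ f, X a f * eps3 b e f)
        - (X b d * eps3 c a e + X b c * eps3 d a e))

/-! Swapping the two free indices permutes the terms of `t̄` and `Q̄`, and those of `t*` once `X`
and `Y` are symmetric; the trace of `t̄` is `3 W̄ - 2 W̄`. After relabelling dummy indices, the
trace of `Q̄` is `𝒫̄_b` plus twice the contraction of `Z^{ae}` with
`tr X ε_{bae} - X_b{}^f ε_{fae} - X_a{}^f ε_{bfe} - X_e{}^f ε_{baf}`, which vanishes by the
Schouten identity: antisymmetrising over four indices in dimension three gives zero. -/

theorem h3_comm (a b : Fin 3) : h3 a b = h3 b a := by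
  simp only [h3, eq_comm]

theorem sum_h3_diag : ∑ a, h3 a a = 3 := by
  simp [h3]

theorem eps3_schouten (X : Mat3) (b a e : Fin 3) :
    (∑ f, X f f) * eps3 b a e
      = ∑ f, (eps3 f a e * X b f + eps3 b f e * X a f + eps3 b a f * X e f) := by
  fin_cases b <;> fin_cases a <;> fin_cases e <;> simp [eps3, Fin.sum_univ_three] <;> ring

theorem tb_comm (X Y Z : Mat3) (c d : Fin 3) : tb X Y Z c d = tb X Y Z d c := by
  unfold tb
  rw [h3_comm]
  congr 1
  exact Finset.sum_congr rfl fun a _ => by ring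

theorem tst_comm {X Y : Mat3} (hX : ∀ a b, X a b = X b a) (hY : ∀ a b, Y a b = Y b a)
    (Z : Mat3) (b d : Fin 3) : tst X Y Z b d = tst X Y Z d b := by
  unfold tst
  rw [hX b d, hY b d, h3_comm]
  simp only [add_comm (X d _ * Y b _), mul_comm (Z _ b), mul_comm (Z b _)]

theorem Qb_comm (X Y Z : Mat3) (b c d : Fin 3) : Qb X Y Z b c d = Qb X Y Z b d c := by
  unfold Qb
  rw [h3_comm c d, add_right_comm (h3 d c * _)]
  congr 1
  exact Finset.sum_congr rfl fun a _ => Finset.sum_congr rfl fun e _ => by ring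

theorem sum_tb_diag (X Y Z : Mat3) : ∑ a, tb X Y Z a a = Wb X Y Z := by
  simp only [tb, Wb, Finset.sum_sub_distrib, ← Finset.sum_mul, Finset.sum_add_distrib, sum_h3_diag]
  rw [Finset.sum_comm (f := fun c a => Z a c * Z a c)]
  ring

theorem sum_Qb_diag (X Y Z : Mat3) (b : Fin 3) :
    ∑ a, Qb X Y Z b a a = Pb X Y Z b + 2 * ∑ a, ∑ e, Z a e *
      ((∑ f, X f f) * eps3 b a e
        - ∑ f, (eps3 f a e * X b f + eps3 b f e * X a f + eps3 b a f * X e f)) := by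
  fin_cases b <;> simp [Qb, Pb, h3, eps3, Fin.sum_univ_three] <;> ring

theorem sum_Qb_diag_eq_Pb (X Y Z : Mat3) (b : Fin 3) : ∑ a, Qb X Y Z b a a = Pb X Y Z b := by
  simp [sum_Qb_diag, eps3_schouten]

theorem bel_parts_algebraic_properties_general
    (X Y Z : Mat3)
    (hXsym : ∀ a b, X a b = X b a) (hYsym : ∀ a b, Y a b = Y b a) :
    (∀ a b, tb X Y Z a b = tb X Y Z b a) ∧
    (∀ a b, tst X Y Z a b = tst X Y Z b a) ∧
    (∀ b c d, Qb X Y Z b c d = Qb X Y Z b d c) ∧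
    ((∑ a, tb X Y Z a a) = Wb X Y Z) ∧
    (∀ b, (∑ a, Qb X Y Z b a a) = Pb X Y Z b) :=
  ⟨tb_comm X Y Z, tst_comm hXsym hYsym Z, Qb_comm X Y Z, sum_tb_diag X Y Z,
    sum_Qb_diag_eq_Pb X Y Z⟩

/-- Basic algebraic properties of the spatial parts of the Bel tensor. -/
theorem bel_parts_algebraic_properties
    (X Y Z : Mat3)
    (hXsym : ∀ a b, X a b = X b a) (hYsym : ∀ a b, Y a b = Y b a)
    (hZtr : (∑ a, Z a a) = 0) :
    (∀ a b, tb X Y Z a b = tb X Y Z b a) ∧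
    (∀ a b, tst X Y Z a b = tst X Y Z b a) ∧
    (∀ b c d, Qb X Y Z b c d = Qb X Y Z b d c) ∧
    ((∑ a, tb X Y Z a a) = Wb X Y Z) ∧
    (∀ b, (∑ a, Qb X Y Z b a a) = Pb X Y Z b) :=
  bel_parts_algebraic_properties_general X Y Z hXsym hYsym
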